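/- For any ε, δ ∈ (0,1) there exists an orchestration problem (a number of agents K, a single region, and correctness probabilities) such that a uniformly randomly chosen agent A_rand satisfies C_max / C(A_rand) ≥ min over pairs k,h with C(A_k) ≠ C(A_h) of d(A_k,A_h) ≥ 1/(1-ε), with probability at least 1-δ. -/
import Mathlib


open Finset

/-- For any ε, δ ∈ (0,1) there exists an orchestration problem such that, with
    probability at least 1-δ over a uniformly random agent,
    C_max / C(A_rand) ≥ min_{k,h : C(A_k) ≠ C(A_h)} d(A_k,A_h) ≥ 1/(1-ε). -/
theorem stmt_9 (ε δ : ℝ) (hε : 0 < ε ∧ ε < 1) (hδ : 0 < δ ∧ δ < 1) :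
    ∃ (K : ℕ) (hK : 0 < K) (c : Fin K → ℝ),
      (∀ k, 0 < c k ∧ c k ≤ 1) ∧
      ((Finset.univ.filter fun k : Fin K =>
          (Finset.univ.sup' ⟨⟨0, hK⟩, Finset.mem_univ _⟩ c) / c k ≥
            sInf {x : ℝ | ∃ i j : Fin K, c i ≠ c j ∧
              x = max (c i / c j) (c j / c i)}).card : ℝ) / K ≥ 1 - δ ∧
      sInf {x : ℝ | ∃ i j : Fin K, c i ≠ c j ∧
          x = max (c i / c j) (c j / c i)} ≥ 1 / (1 - ε) := by
  obtain ⟨hε0, hε1⟩ := hε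
  obtain ⟨hδ0, hδ1⟩ := hδ
  have h1ε : 0 < 1 - ε := by linarith
  set K : ℕ := ⌈1/δ⌉₊ with hKdef
  have hKδ : (1:ℝ)/δ ≤ K := Nat.le_ceil _
  have hK2 : 2 ≤ K := by
    have h1 : (1:ℝ) < 1/δ := one_lt_one_div hδ0 hδ1
    have : 1 < K := Nat.lt_ceil.mpr (by exact_mod_cast h1)
    omega
  have hK : 0 < K := by omega
  set c : Fin K → ℝ := fun k => if (k : ℕ) = 0 then 1 else 1 - ε with hc
  have hcpos : ∀ k, 0 < c k ∧ c k ≤ 1 := by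
    intro k
    simp only [hc]
    split <;> constructor <;> linarith
  refine ⟨K, hK, c, hcpos, ?_, ?_⟩
  all_goals {
  have hgt : (1:ℝ) < 1 / (1 - ε) := one_lt_one_div h1ε (by linarith)
  -- sup = 1
  have hsup : Finset.univ.sup' ⟨⟨0, hK⟩, Finset.mem_univ _⟩ c = 1 := by
    apply le_antisymm
    · exact Finset.sup'_le _ _ fun k _ => (hcpos k).2
    · have : c ⟨0, hK⟩ = 1 := by simp [hc]
      calc (1:ℝ) = c ⟨0, hK⟩ := this.symm
        _ ≤ _ := Finset.le_sup' c (Finset.mem_univ _)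
  -- the set is a singleton
  have hS : {x : ℝ | ∃ i j : Fin K, c i ≠ c j ∧
      x = max (c i / c j) (c j / c i)} = {1 / (1 - ε)} := by
    ext x
    simp only [Set.mem_setOf_eq, Set.mem_singleton_iff]
    constructor
    · rintro ⟨i, j, hij, rfl⟩
      have hmax : max ((1:ℝ) / (1 - ε)) ((1 - ε) / 1) = 1 / (1 - ε) := by
        apply max_eq_left; rw [div_one]; linarith
      by_cases hi : (i : ℕ) = 0 <;> by_cases hj : (j : ℕ) = 0 <;>
        simp only [hc, hi, hj, if_true, if_false, ite_true, ite_false] at hij ⊢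
      · exact absurd rfl hij
      · exact hmax
      · rw [max_comm]; exact hmax
      · exact absurd rfl hij
    · rintro rfl
      have e0 : c ⟨0, hK⟩ = 1 := by simp [hc]
      have e1 : c (⟨1, by omega⟩ : Fin K) = 1 - ε := by simp [hc]
      refine ⟨⟨0, hK⟩, ⟨1, by omega⟩, ?_, ?_⟩
      · rw [e0, e1]; intro h; linarith
      · rw [e0, e1, div_one]
        exact (max_eq_left (by linarith)).symm
  have hInf : sInf {x : ℝ | ∃ i j : Fin K, c i ≠ c j ∧
      x = max (c i / c j) (c j / c i)} = 1 / (1 - ε) := by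
    rw [hS]; exact csInf_singleton _
  first
  | exact hInf.ge
  | · -- probability bound
      have hfilter : (Finset.univ.filter fun k : Fin K =>
          (Finset.univ.sup' ⟨⟨0, hK⟩, Finset.mem_univ _⟩ c) / c k ≥
            sInf {x : ℝ | ∃ i j : Fin K, c i ≠ c j ∧
              x = max (c i / c j) (c j / c i)}) =
          Finset.univ.erase ⟨0, hK⟩ := by
        ext k
        simp only [Finset.mem_filter, Finset.mem_univ, true_and, Finset.mem_erase, and_true]
        rw [hsup, hInf]
        constructor
        · intro h hk0
          rw [hk0] at h
          have e0 : c ⟨0, hK⟩ = 1 := by simp [hc]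
          rw [e0, div_one] at h
          linarith
        · intro hk0
          have hk : (k : ℕ) ≠ 0 := by
            intro h
            exact hk0 (Fin.ext h)
          have : c k = 1 - ε := by simp [hc, hk]
          rw [this]
      rw [hfilter, Finset.card_erase_of_mem (Finset.mem_univ _), Finset.card_univ,
        Fintype.card_fin]
      have hKpos : (0:ℝ) < K := by exact_mod_cast hK
      have h1δK : 1 ≤ δ * K := by
        rw [div_le_iff₀ hδ0] at hKδ
        linarith
      have : ((K - 1 : ℕ) : ℝ) = (K : ℝ) - 1 := by
        push_cast [Nat.cast_sub (by omega : 1 ≤ K)]; ring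
      rw [this, ge_iff_le, le_div_iff₀ hKpos]
      nlinarith
  }
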